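/- The Haar diagonal matrix element of the free-particle propagator has the closed form [σ₀ⁿ]₀₀ = 2 Σ_{k=0}^{∞} J_{2k}(0, a) = −i √(2/π) · F₁(e^{iπ/4}/√(2a)), where a > 0 and F₁(x) = Σ_{k=0}^{∞} x^{2k+1}/((2k+1)(2k+2)!!). -/

import Mathlib

open MeasureTheory Real Complex Nat

/-- The contour power integral `J_m(l,a)`. -/
noncomputable def J (m : ℕ) (l a : ℝ) : ℂ :=
  (Complex.exp (Complex.I * Real.pi * ((m:ℂ) - 1) / 4) / (2 * Real.pi * ((m+2).factorial : ℝ))) *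
    ∫ ρ : ℝ, Complex.exp ((ρ:ℂ) * l * Complex.exp (Complex.I * Real.pi / 4) - a * ρ^2) * (ρ:ℂ)^m

/-- The auxiliary power series `F₁(x) = Σ x^(2k+1)/((2k+1)(2k+2)‼)`. -/
noncomputable def F1 (x : ℂ) : ℂ :=
  ∑' k : ℕ, x^(2*k+1) / ((2*(k:ℂ)+1) * (((2*k+2)‼ : ℕ) : ℂ))

/-! At `l = 0` each `J_{2k}(0, a)` is a Gaussian moment `∫ ρ^{2k} e^{-aρ²} = (2k-1)‼ √π / ((2a)^k √a)`.
Since `(2k+2)! = (2k+2)‼ (2k+1) (2k-1)‼`, the odd double factorial cancels and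
`2 J_{2k}(0, a) = e^{iπ(2k-1)/4} / (√(πa) (2a)^k (2k+2)‼ (2k+1))`; writing
`e^{iπ(2k-1)/4} = -i (e^{iπ/4})^{2k+1}` identifies this with `-i √(2/π)` times the `k`-th term of
`F₁(e^{iπ/4}/√(2a))`. -/

theorem integral_abs_rpow_mul_exp_neg_mul_sq {q b : ℝ} (hq : -1 < q) (hb : 0 < b) :
    ∫ x : ℝ, |x| ^ q * Real.exp (-b * x ^ 2) = b ^ (-(q + 1) / 2) * Real.Gamma ((q + 1) / 2) := by
  have h := integral_rpow_mul_exp_neg_mul_rpow two_pos hq hb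
  simp only [Real.rpow_two] at h
  have habs := integral_comp_abs (f := fun x => x ^ q * Real.exp (-b * x ^ 2))
  simp only [sq_abs] at habs
  rw [habs, h]
  ring

theorem integral_pow_two_mul_mul_exp_neg_mul_sq {b : ℝ} (hb : 0 < b) (k : ℕ) :
    ∫ x : ℝ, x ^ (2 * k) * Real.exp (-b * x ^ 2) = (2 * k - 1 : ℕ)‼ * √π / ((2 * b) ^ k * √b) := by
  have h := integral_abs_rpow_mul_exp_neg_mul_sq (q := (2 * k : ℕ))
    (neg_one_lt_zero.trans_le (Nat.cast_nonneg _)) hb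
  simp only [Real.rpow_natCast, (even_two_mul k).pow_abs] at h
  rw [h, show (((2 * k : ℕ) : ℝ) + 1) / 2 = k + 1 / 2 by push_cast; ring, Real.Gamma_nat_add_half,
    show -(((2 * k : ℕ) : ℝ) + 1) / 2 = -(k + 1 / 2) by push_cast; ring,
    Real.rpow_neg hb.le, Real.rpow_add hb, Real.rpow_natCast, ← Real.sqrt_eq_rpow, mul_pow]
  field_simp

theorem Nat.factorial_two_mul_add_two (k : ℕ) :
    (2 * k + 2)! = (2 * k + 2)‼ * ((2 * k + 1) * (2 * k - 1)‼) := by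
  rw [factorial_eq_mul_doubleFactorial (2 * k + 1), doubleFactorial_add_one (2 * k)]

theorem J_two_mul_zero {a : ℝ} (ha : 0 < a) (k : ℕ) :
    J (2 * k) 0 a = Complex.exp (I * π * (2 * k - 1) / 4) /
      ((2 * √π * √a * (2 * a) ^ k * (2 * k + 2)‼ * (2 * k + 1) : ℝ) : ℂ) := by
  have hmoment : ∫ ρ : ℝ, Complex.exp ((ρ : ℂ) * (0 : ℝ) * Complex.exp (I * π / 4) - a * ρ ^ 2)
      * (ρ : ℂ) ^ (2 * k) = ((∫ x : ℝ, x ^ (2 * k) * Real.exp (-a * x ^ 2) : ℝ) : ℂ) := by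
    rw [← integral_complex_ofReal]
    congr 1 with ρ
    push_cast
    ring_nf
  have hπ : √π ^ 2 = π := Real.sq_sqrt pi_pos.le
  have hdf : ((2 * k - 1)‼ : ℂ) ≠ 0 := Nat.cast_ne_zero.mpr (doubleFactorial_pos _).ne'
  rw [J, hmoment, integral_pow_two_mul_mul_exp_neg_mul_sq ha, Nat.factorial_two_mul_add_two]
  push_cast
  field_simp
  rw [← Complex.ofReal_pow, hπ]

theorem two_mul_J_two_mul_zero {a : ℝ} (ha : 0 < a) (k : ℕ) :
    2 * J (2 * k) 0 a = -I * (√(2 / π) : ℂ) *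
      ((Complex.exp (I * π / 4) / (√(2 * a) : ℂ)) ^ (2 * k + 1) /
        ((2 * (k : ℂ) + 1) * (((2 * k + 2)‼ : ℕ) : ℂ))) := by
  have hphase : Complex.exp (I * π * (2 * k - 1) / 4)
      = -I * Complex.exp (I * π / 4) ^ (2 * k + 1) := by
    rw [show I * π * (2 * k - 1) / 4 = ((2 * k + 1 : ℕ) : ℂ) * (I * π / 4) + -π / 2 * I by
        push_cast; ring,
      Complex.exp_add, Complex.exp_nat_mul, Complex.exp_neg_pi_div_two_mul_I, mul_comm]
  have hsqrt : √(2 * a) ^ (2 * k + 1) = (2 * a) ^ k * √2 * √a := by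
    rw [pow_succ, pow_mul, Real.sq_sqrt (by positivity), Real.sqrt_mul zero_le_two]
    ring
  have : √a ≠ 0 := by positivity
  have : √π ≠ 0 := by positivity
  have : √2 ≠ 0 := by positivity
  rw [J_two_mul_zero ha, hphase, div_pow, ← Complex.ofReal_pow, hsqrt, Real.sqrt_div' 2 pi_pos.le]
  push_cast
  field_simp

theorem haar_diagonal_closed_form (a : ℝ) (ha : 0 < a) :
    2 * ∑' k : ℕ, J (2*k) 0 a
      = -Complex.I * (Real.sqrt (2 / Real.pi) : ℂ) *
          F1 (Complex.exp (Complex.I * Real.pi / 4) / (Real.sqrt (2*a) : ℂ)) := by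
  rw [F1, ← tsum_mul_left, ← tsum_mul_left]
  exact tsum_congr fun k => two_mul_J_two_mul_zero ha k
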